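/- Let p = Q and let 0 < r < R. The function u(x) = (log ψ(x) − log R)/(log r − log R) satisfies Δ_Q u = 0 at every point of the annulus {x : r < ψ(x) < R} where Σ ≠ 0, together with the boundary conditions u(x) = 1 whenever ψ(x) = r and u(x) = 0 whenever ψ(x) = R. -/

import Mathlib

open MeasureTheory Real Filter

noncomputable section

/-- Points of `ℝ^{2n+1}`: the `2n` horizontal coordinates indexed by `Fin n ⊕ Fin n`
(`Sum.inl i` encodes the coordinate `x_i` for `1 ≤ i ≤ n`, and `Sum.inr i` encodes the
coordinate `x_{i+n}`), together with the vertical coordinate `t`. -/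
abbrev Pt (n : ℕ) := ((Fin n ⊕ Fin n) → ℝ) × ℝ

/-- `Σ(x) = ∑_{l=1}^{2n} (x_l - a_l)²`. -/
def Sg (n : ℕ) (a : Fin n ⊕ Fin n → ℝ) (x : Pt n) : ℝ :=
  ∑ l : Fin n ⊕ Fin n, (x.1 l - a l) ^ 2

/-- Partial derivative `∂u/∂x_l` in the `l`-th horizontal coordinate direction. -/
def pdx (n : ℕ) (l : Fin n ⊕ Fin n) (u : Pt n → ℝ) (x : Pt n) : ℝ :=
  fderiv ℝ u x (Pi.single l 1, 0)

/-- Partial derivative `∂u/∂t` in the vertical direction. -/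
def pdt (n : ℕ) (u : Pt n → ℝ) (x : Pt n) : ℝ :=
  fderiv ℝ u x (0, 1)

/-- The Hörmander vector fields:
`X_i u = ∂u/∂x_i + 2kc (x_{i+n} - a_{i+n}) Σ^{k-1} ∂u/∂t` for `1 ≤ i ≤ n`, and
`X_j u = ∂u/∂x_j - 2kc (x_{j-n} - a_{j-n}) Σ^{k-1} ∂u/∂t` for `n+1 ≤ j ≤ 2n`. -/
def X (n : ℕ) (k c : ℝ) (a : Fin n ⊕ Fin n → ℝ) (l : Fin n ⊕ Fin n)
    (u : Pt n → ℝ) (x : Pt n) : ℝ :=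
  match l with
  | Sum.inl i => pdx n (Sum.inl i) u x
      + 2 * k * c * (x.1 (Sum.inr i) - a (Sum.inr i)) * Sg n a x ^ (k - 1) * pdt n u x
  | Sum.inr j => pdx n (Sum.inr j) u x
      - 2 * k * c * (x.1 (Sum.inl j) - a (Sum.inl j)) * Sg n a x ^ (k - 1) * pdt n u x

/-- Norm of the horizontal gradient `∇₀u = (X₁u, …, X_{2n}u)`. -/
def hnorm (n : ℕ) (k c : ℝ) (a : Fin n ⊕ Fin n → ℝ) (u : Pt n → ℝ) (x : Pt n) : ℝ :=
  Real.sqrt (∑ l : Fin n ⊕ Fin n, (X n k c a l u x) ^ 2)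

/-- The `p`-Laplacian `Δ_p u = ∑_{l=1}^{2n} X_l (‖∇₀u‖^{p-2} X_l u)`. -/
def pLap (n : ℕ) (k c : ℝ) (a : Fin n ⊕ Fin n → ℝ) (p : ℝ) (u : Pt n → ℝ) (x : Pt n) : ℝ :=
  ∑ l : Fin n ⊕ Fin n,
    X n k c a l (fun y => hnorm n k c a u y ^ (p - 2) * X n k c a l u y) x

/-- `h(x) = c² Σ(x)^{2k} + (t-s)²`. -/
def hfun (n : ℕ) (k c : ℝ) (a : Fin n ⊕ Fin n → ℝ) (s : ℝ) (x : Pt n) : ℝ :=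
  c ^ 2 * Sg n a x ^ (2 * k) + (x.2 - s) ^ 2

/-- `ψ = h^{1/(4k)}`. -/
def psi (n : ℕ) (k c : ℝ) (a : Fin n ⊕ Fin n → ℝ) (s : ℝ) (x : Pt n) : ℝ :=
  hfun n k c a s x ^ (1 / (4 * k))

/-! Each `X_l` is differentiation along a vector field (`horizField l`), hence obeys the product
and chain rules. With `y = x - a` and `v_l = c Σ^k y_l ± (t - s) y_{l'}` (`gaugeDir`, where `l'` is
the coordinate paired with `l`) one has `X_l h = 4kcΣ^{k-1} v_l`, `∑ v_l² = Σ h`,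
`∑ y_l v_l = cΣ^{k+1}` and `∑ X_l v_l = (2n + 4k) cΣ^k`. As `u` is affine in `log h`, `∇₀u` is a
multiple of `v`, and where `Σ > 0` the flux `‖∇₀u‖^{Q-2} X_l u` is `C Σ^m h^e v_l` with
`m = (2k-1)(Q-2)/2 + k - 1` and `e = -Q/2`. By the product rule and the four identities its
divergence is `C (2m + 4ek + 4k + 2n) c Σ^{m+k} h^e`, and `2m + 4ek + 4k + 2n = 2n + 2k - Q = 0`. -/

section HorizontalCalculus

variable {n : ℕ} (k c : ℝ) (a : Fin n ⊕ Fin n → ℝ)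

-- `l.swap` is the coordinate paired with `l` (`x_i ↔ x_{i+n}`) and `twistSign l` the sign of the
-- `∂/∂t` term in `X_l`.
def twistSign : Fin n ⊕ Fin n → ℝ := Sum.elim (fun _ => 1) (fun _ => -1)

theorem twistSign_sq (l : Fin n ⊕ Fin n) : twistSign l ^ 2 = 1 := by
  cases l <;> norm_num [twistSign]

def horizField (l : Fin n ⊕ Fin n) (x : Pt n) : Pt n :=
  (Pi.single l 1, 2 * k * c * twistSign l * (x.1 l.swap - a l.swap) * Sg n a x ^ (k - 1))

theorem X_eq_fderiv (l : Fin n ⊕ Fin n) (u : Pt n → ℝ) (x : Pt n) :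
    X n k c a l u x = fderiv ℝ u x (horizField k c a l x) := by
  have hsplit : ∀ τ : ℝ, (Pi.single l (1 : ℝ), τ) = ((Pi.single l 1, 0) : Pt n) + τ • (0, 1) := by
    intro τ; ext <;> simp
  rw [horizField, hsplit, map_add, map_smul, smul_eq_mul]
  cases l <;> simp only [X, pdx, pdt, twistSign, Sum.elim_inl, Sum.elim_inr, Sum.swap_inl,
    Sum.swap_inr] <;> ring

theorem X_congr_of_eventuallyEq {f g : Pt n → ℝ} {x : Pt n} (h : f =ᶠ[nhds x] g)
    (l : Fin n ⊕ Fin n) : X n k c a l f x = X n k c a l g x := by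
  rw [X_eq_fderiv, X_eq_fderiv, h.fderiv_eq]

def HasHGrad (f : Pt n → ℝ) (x : Pt n) (g : Fin n ⊕ Fin n → ℝ) : Prop :=
  ∃ L : Pt n →L[ℝ] ℝ, HasFDerivAt f L x ∧ ∀ l, L (horizField k c a l x) = g l

namespace HasHGrad

variable {k c a} {f f' : Pt n → ℝ} {x : Pt n} {g g' : Fin n ⊕ Fin n → ℝ}

theorem X_eq (h : HasHGrad k c a f x g) (l : Fin n ⊕ Fin n) : X n k c a l f x = g l := by
  obtain ⟨L, hL, hg⟩ := h
  rw [X_eq_fderiv, hL.fderiv, hg]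

theorem congr_grad (h : HasHGrad k c a f x g) (hg : ∀ l, g l = g' l) : HasHGrad k c a f x g' := by
  obtain ⟨L, hL, hL'⟩ := h
  exact ⟨L, hL, fun l => (hL' l).trans (hg l)⟩

theorem const (b : ℝ) : HasHGrad k c a (fun _ => b) x fun _ => 0 :=
  ⟨0, hasFDerivAt_const b x, fun _ => rfl⟩

theorem add (hf : HasHGrad k c a f x g) (hf' : HasHGrad k c a f' x g') :
    HasHGrad k c a (fun y => f y + f' y) x fun l => g l + g' l := by
  obtain ⟨L, hL, hg⟩ := hf; obtain ⟨L', hL', hg'⟩ := hf'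
  exact ⟨L + L', hL.add hL', fun l => by simp [hg, hg']⟩

theorem sub (hf : HasHGrad k c a f x g) (hf' : HasHGrad k c a f' x g') :
    HasHGrad k c a (fun y => f y - f' y) x fun l => g l - g' l := by
  obtain ⟨L, hL, hg⟩ := hf; obtain ⟨L', hL', hg'⟩ := hf'
  exact ⟨L - L', hL.sub hL', fun l => by simp [hg, hg']⟩

theorem mul (hf : HasHGrad k c a f x g) (hf' : HasHGrad k c a f' x g') :
    HasHGrad k c a (fun y => f y * f' y) x fun l => f x * g' l + f' x * g l := by
  obtain ⟨L, hL, hg⟩ := hf; obtain ⟨L', hL', hg'⟩ := hf'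
  exact ⟨f x • L' + f' x • L, hL.mul hL', fun l => by simp [hg, hg']⟩

theorem pow_two (hf : HasHGrad k c a f x g) :
    HasHGrad k c a (fun y => f y ^ 2) x fun l => 2 * f x * g l := by
  simpa only [← sq, ← two_mul, mul_assoc] using hf.mul hf

theorem const_mul (hf : HasHGrad k c a f x g) (b : ℝ) :
    HasHGrad k c a (fun y => b * f y) x fun l => b * g l := by
  simpa using (const b).mul hf

theorem rpow (hf : HasHGrad k c a f x g) (hfx : f x ≠ 0) (p : ℝ) :
    HasHGrad k c a (fun y => f y ^ p) x fun l => p * f x ^ (p - 1) * g l := by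
  obtain ⟨L, hL, hg⟩ := hf
  exact ⟨_, hL.rpow_const (Or.inl hfx), fun l => by simp [hg]⟩

theorem log (hf : HasHGrad k c a f x g) (hfx : f x ≠ 0) :
    HasHGrad k c a (fun y => Real.log (f y)) x fun l => (f x)⁻¹ * g l := by
  obtain ⟨L, hL, hg⟩ := hf
  exact ⟨_, hL.log hfx, fun l => by simp [hg]⟩

theorem sum {ι : Type*} [Fintype ι] {F : ι → Pt n → ℝ} {G : ι → Fin n ⊕ Fin n → ℝ}
    (h : ∀ i, HasHGrad k c a (F i) x (G i)) :
    HasHGrad k c a (fun y => ∑ i, F i y) x fun l => ∑ i, G i l := by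
  choose L hL hg using h
  exact ⟨∑ i, L i, HasFDerivAt.fun_sum fun i _ => hL i, fun l => by simp [hg]⟩

end HasHGrad

theorem hasHGrad_coord (j : Fin n ⊕ Fin n) (x : Pt n) :
    HasHGrad k c a (fun y => y.1 j) x fun l => (Pi.single l 1 : Fin n ⊕ Fin n → ℝ) j :=
  let L : Pt n →L[ℝ] ℝ := (ContinuousLinearMap.proj j).comp (ContinuousLinearMap.fst ℝ _ ℝ)
  ⟨L, L.hasFDerivAt, fun _ => rfl⟩

theorem hasHGrad_snd (x : Pt n) :
    HasHGrad k c a (fun y => y.2) x fun l => (horizField k c a l x).2 :=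
  ⟨_, hasFDerivAt_snd, fun _ => rfl⟩

theorem Sg_nonneg (x : Pt n) : 0 ≤ Sg n a x :=
  Finset.sum_nonneg fun _ _ => sq_nonneg _

theorem continuous_Sg : Continuous (Sg n a) := by
  unfold Sg; fun_prop

theorem sum_sq_swap (x : Pt n) : ∑ l : Fin n ⊕ Fin n, (x.1 l.swap - a l.swap) ^ 2 = Sg n a x :=
  (Equiv.sumComm (Fin n) (Fin n)).sum_comp fun l => (x.1 l - a l) ^ 2

theorem sum_twistSign_mul_swap (y : Fin n ⊕ Fin n → ℝ) :
    ∑ l, twistSign l * (y l * y l.swap) = 0 := by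
  simp [Fintype.sum_sum_type, twistSign, mul_comm]

theorem hasHGrad_Sg (x : Pt n) : HasHGrad k c a (Sg n a) x fun l => 2 * (x.1 l - a l) := by
  have hsq : ∀ j, HasHGrad k c a (fun y => (y.1 j - a j) ^ 2) x
      fun l => 2 * (x.1 j - a j) * (Pi.single l 1 : Fin n ⊕ Fin n → ℝ) j := fun j => by
    simpa using ((hasHGrad_coord k c a j x).sub (HasHGrad.const (a j))).pow_two
  refine (HasHGrad.sum hsq).congr_grad fun l => ?_
  simp [Pi.single_apply]

end HorizontalCalculus

section Gauge

variable {n : ℕ} (k c : ℝ) (a : Fin n ⊕ Fin n → ℝ) (s : ℝ)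

def gaugeDir (l : Fin n ⊕ Fin n) (x : Pt n) : ℝ :=
  c * Sg n a x ^ k * (x.1 l - a l) + twistSign l * (x.2 - s) * (x.1 l.swap - a l.swap)

theorem hfun_pos (hc : c ≠ 0) {x : Pt n} (hS : 0 < Sg n a x) : 0 < hfun n k c a s x := by
  unfold hfun; positivity

theorem sum_mul_gaugeDir (x : Pt n) :
    ∑ l, (x.1 l - a l) * gaugeDir k c a s l x = c * Sg n a x ^ k * Sg n a x := by
  have hl : ∀ l, (x.1 l - a l) * gaugeDir k c a s l x = c * Sg n a x ^ k * (x.1 l - a l) ^ 2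
      + (x.2 - s) * (twistSign l * ((x.1 l - a l) * (x.1 l.swap - a l.swap))) := fun l => by
    rw [gaugeDir]; ring
  rw [Finset.sum_congr rfl fun l _ => hl l, Finset.sum_add_distrib, ← Finset.mul_sum,
    ← Finset.mul_sum, sum_twistSign_mul_swap, Sg]
  ring

theorem sum_gaugeDir_sq (x : Pt n) :
    ∑ l, gaugeDir k c a s l x ^ 2 = Sg n a x * hfun n k c a s x := by
  have h2k : Sg n a x ^ (2 * k) = (Sg n a x ^ k) ^ 2 := by
    rw [mul_comm, Real.rpow_mul (Sg_nonneg a x)]; norm_num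
  have hl : ∀ l, gaugeDir k c a s l x ^ 2 = (c * Sg n a x ^ k) ^ 2 * (x.1 l - a l) ^ 2
      + 2 * c * Sg n a x ^ k * (x.2 - s) * (twistSign l * ((x.1 l - a l) * (x.1 l.swap - a l.swap)))
      + (x.2 - s) ^ 2 * (x.1 l.swap - a l.swap) ^ 2 := fun l => by
    rw [gaugeDir]
    linear_combination (x.2 - s) ^ 2 * (x.1 l.swap - a l.swap) ^ 2 * twistSign_sq l
  rw [Finset.sum_congr rfl fun l _ => hl l, Finset.sum_add_distrib, Finset.sum_add_distrib,
    ← Finset.mul_sum, ← Finset.mul_sum, ← Finset.mul_sum, sum_twistSign_mul_swap, sum_sq_swap,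
    hfun, h2k, Sg]
  ring

theorem hasHGrad_hfun {x : Pt n} (hS : 0 < Sg n a x) :
    HasHGrad k c a (hfun n k c a s) x
      fun l => 4 * k * c * Sg n a x ^ (k - 1) * gaugeDir k c a s l x := by
  have hsplit : Sg n a x ^ (2 * k - 1) = Sg n a x ^ (k - 1) * Sg n a x ^ k := by
    rw [← Real.rpow_add hS]; ring_nf
  have ht := (hasHGrad_snd k c a x).sub (HasHGrad.const s)
  refine ((((hasHGrad_Sg k c a x).rpow hS.ne' (2 * k)).const_mul (c ^ 2)).add
    ht.pow_two).congr_grad fun l => ?_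
  simp only [horizField, gaugeDir, hsplit]
  ring

theorem hasHGrad_gaugeDir {x : Pt n} (hS : 0 < Sg n a x) (l : Fin n ⊕ Fin n) :
    HasHGrad k c a (gaugeDir k c a s l) x fun j =>
      c * Sg n a x ^ k * (Pi.single j 1 : Fin n ⊕ Fin n → ℝ) l
        + 2 * k * c * Sg n a x ^ (k - 1) * (x.1 j - a j) * (x.1 l - a l)
        + twistSign l * (x.2 - s) * (Pi.single j 1 : Fin n ⊕ Fin n → ℝ) l.swap
        + 2 * k * c * twistSign j * twistSign l * Sg n a x ^ (k - 1)
          * (x.1 j.swap - a j.swap) * (x.1 l.swap - a l.swap) := by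
  have hy := fun i => (hasHGrad_coord k c a i x).sub (HasHGrad.const (a i))
  refine (((((hasHGrad_Sg k c a x).rpow hS.ne' k).const_mul c).mul (hy l)).add
    (((hasHGrad_snd k c a x).sub (HasHGrad.const s)).const_mul (twistSign l) |>.mul
      (hy l.swap))).congr_grad fun j => ?_
  simp only [horizField]
  ring

theorem X_gaugeDir_self {x : Pt n} (hS : 0 < Sg n a x) (l : Fin n ⊕ Fin n) :
    X n k c a l (gaugeDir k c a s l) x = c * Sg n a x ^ k
      + 2 * k * c * Sg n a x ^ (k - 1) * ((x.1 l - a l) ^ 2 + (x.1 l.swap - a l.swap) ^ 2) := by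
  have hswap : l.swap ≠ l := by cases l <;> simp
  rw [(hasHGrad_gaugeDir k c a s hS l).X_eq, Pi.single_eq_same, Pi.single_eq_of_ne hswap]
  linear_combination 2 * k * c * Sg n a x ^ (k - 1) * (x.1 l.swap - a l.swap) ^ 2 * twistSign_sq l

theorem sum_X_gaugeDir_self {x : Pt n} (hS : 0 < Sg n a x) :
    ∑ l, X n k c a l (gaugeDir k c a s l) x = (2 * n + 4 * k) * c * Sg n a x ^ k := by
  have hk : Sg n a x ^ k = Sg n a x ^ (k - 1) * Sg n a x := by
    rw [← Real.rpow_add_one hS.ne']; ring_nf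
  simp only [X_gaugeDir_self k c a s hS, Finset.sum_add_distrib, ← Finset.mul_sum,
    sum_sq_swap, Finset.sum_const, Finset.card_univ, Fintype.card_sum, Fintype.card_fin,
    nsmul_eq_mul]
  rw [← Sg, hk]
  push_cast
  ring

theorem sum_X_rpow_mul_gaugeDir {x : Pt n} (hS : 0 < Sg n a x) (hH : hfun n k c a s x ≠ 0)
    (C m e : ℝ) :
    ∑ l, X n k c a l (fun y => C * (Sg n a y ^ m * (hfun n k c a s y ^ e * gaugeDir k c a s l y))) x
      = C * (2 * m + 4 * e * k + 4 * k + 2 * n) * c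
          * (Sg n a x ^ (m + k) * hfun n k c a s x ^ e) := by
  set S := Sg n a x
  set H := hfun n k c a s x
  have hX : ∀ l, X n k c a l
      (fun y => C * (Sg n a y ^ m * (hfun n k c a s y ^ e * gaugeDir k c a s l y))) x
      = C * (S ^ m * H ^ e) * X n k c a l (gaugeDir k c a s l) x
        + C * 4 * e * k * c * S ^ m * S ^ (k - 1) * H ^ (e - 1) * gaugeDir k c a s l x ^ 2
        + C * 2 * m * S ^ (m - 1) * H ^ e * ((x.1 l - a l) * gaugeDir k c a s l x) := fun l => by
    rw [((((hasHGrad_Sg k c a x).rpow hS.ne' m).mul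
      (((hasHGrad_hfun k c a s hS).rpow hH e).mul (hasHGrad_gaugeDir k c a s hS l))).const_mul
        C).X_eq, (hasHGrad_gaugeDir k c a s hS l).X_eq]
    ring
  have hSm : S ^ m = S ^ (m - 1) * S := by rw [← Real.rpow_add_one hS.ne']; ring_nf
  have hSk : S ^ k = S ^ (k - 1) * S := by rw [← Real.rpow_add_one hS.ne']; ring_nf
  have hHe : H ^ e = H ^ (e - 1) * H := by rw [← Real.rpow_add_one hH]; ring_nf
  simp only [hX, Finset.sum_add_distrib, ← Finset.mul_sum, sum_X_gaugeDir_self k c a s hS,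
    sum_gaugeDir_sq, sum_mul_gaugeDir]
  rw [Real.rpow_add hS, hSm, hSk, hHe]
  ring

-- Also true where `h x = 0`, by the conventions `0 ^ p = 0` (for `p ≠ 0`) and `log 0 = 0`.
theorem log_psi (hk : k ≠ 0) (x : Pt n) :
    Real.log (psi n k c a s x) = Real.log (hfun n k c a s x) / (4 * k) := by
  have hH : 0 ≤ hfun n k c a s x := by
    have := Real.rpow_nonneg (Sg_nonneg a x) (2 * k)
    unfold hfun; positivity
  rcases hH.eq_or_lt with hH | hH
  · rw [psi, ← hH, Real.zero_rpow (by simpa using hk)]; simp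
  · rw [psi, Real.log_rpow hH]; ring

theorem hasHGrad_log_psi (hk : k ≠ 0) {x : Pt n} (hS : 0 < Sg n a x)
    (hH : 0 < hfun n k c a s x) (A D : ℝ) :
    HasHGrad k c a (fun y => (Real.log (psi n k c a s y) - A) / D) x fun l =>
      c / D * (Sg n a x ^ (k - 1) * hfun n k c a s x ^ (-1 : ℝ)) * gaugeDir k c a s l x := by
  have hu : (fun y => (Real.log (psi n k c a s y) - A) / D)
      = fun y => (4 * k * D)⁻¹ * Real.log (hfun n k c a s y) - A / D := by
    funext y; rw [log_psi k c a s hk]; ring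
  rw [hu]
  refine ((((hasHGrad_hfun k c a s hS).log hH.ne').const_mul _).sub (HasHGrad.const _)).congr_grad
    fun l => ?_
  rw [Real.rpow_neg_one]
  field_simp
  ring

theorem hnorm_log_psi_rpow (hk : k ≠ 0) {x : Pt n} (hS : 0 < Sg n a x)
    (hH : 0 < hfun n k c a s x) (A D p : ℝ) :
    hnorm n k c a (fun y => (Real.log (psi n k c a s y) - A) / D) x ^ p
      = ((c / D) ^ 2) ^ (p / 2) * (Sg n a x ^ ((2 * k - 1) * (p / 2))
          * hfun n k c a s x ^ (-(p / 2))) := by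
  have hsq : ∑ l, X n k c a l (fun y => (Real.log (psi n k c a s y) - A) / D) x ^ 2
      = (c / D) ^ 2 * (Sg n a x ^ (2 * k - 1) * (hfun n k c a s x)⁻¹) := by
    simp only [(hasHGrad_log_psi k c a s hk hS hH A D).X_eq, mul_pow, ← Finset.mul_sum,
      sum_gaugeDir_sq]
    rw [show 2 * k - 1 = (k - 1) + (k - 1) + 1 by ring, Real.rpow_add_one hS.ne',
      Real.rpow_add hS, Real.rpow_neg_one]
    field_simp
  rw [hnorm, hsq, Real.sqrt_eq_rpow, ← Real.rpow_mul (by positivity),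
    Real.mul_rpow (by positivity) (by positivity), Real.mul_rpow (by positivity) (by positivity),
    ← Real.rpow_mul hS.le, Real.inv_rpow hH.le, ← Real.rpow_neg hH.le]
  ring_nf

theorem hnorm_rpow_mul_X_log_psi (hk : k ≠ 0) {x : Pt n} (hS : 0 < Sg n a x)
    (hH : 0 < hfun n k c a s x) (A D p : ℝ) (l : Fin n ⊕ Fin n) :
    hnorm n k c a (fun y => (Real.log (psi n k c a s y) - A) / D) x ^ p
        * X n k c a l (fun y => (Real.log (psi n k c a s y) - A) / D) x
      = ((c / D) ^ 2) ^ (p / 2) * (c / D) * (Sg n a x ^ ((2 * k - 1) * (p / 2) + (k - 1))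
          * (hfun n k c a s x ^ (-(p / 2) + -1) * gaugeDir k c a s l x)) := by
  rw [hnorm_log_psi_rpow k c a s hk hS hH, (hasHGrad_log_psi k c a s hk hS hH A D).X_eq,
    Real.rpow_add hS, Real.rpow_add hH]
  ring

end Gauge

theorem stmt15_general (n : ℕ) (a : Fin n ⊕ Fin n → ℝ) (s : ℝ)
    (c k : ℝ) (hc : c ≠ 0) (hk : 0 < k)
    (Q : ℝ) (hQ : Q = 2 * n + 2 * k) (r R : ℝ) (hr : 0 < r) (hrR : r < R) :
    (∀ x : Pt n, r < psi n k c a s x → psi n k c a s x < R → Sg n a x ≠ 0 →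
      pLap n k c a Q
        (fun y => (Real.log (psi n k c a s y) - Real.log R) / (Real.log r - Real.log R)) x = 0)
    ∧ (∀ x : Pt n, psi n k c a s x = r →
        (Real.log (psi n k c a s x) - Real.log R) / (Real.log r - Real.log R) = 1)
    ∧ (∀ x : Pt n, psi n k c a s x = R →
        (Real.log (psi n k c a s x) - Real.log R) / (Real.log r - Real.log R) = 0) := by
  have hD : Real.log r - Real.log R ≠ 0 := (sub_neg.2 (Real.log_lt_log hr hrR)).ne
  refine ⟨fun x _ _ hS0 => ?_, fun x hx => by rw [hx, div_self hD], fun x hx => by simp [hx]⟩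
  have hS : 0 < Sg n a x := (Sg_nonneg a x).lt_of_ne' hS0
  have hSpos : ∀ᶠ y in nhds x, 0 < Sg n a y :=
    (isOpen_lt continuous_const (continuous_Sg a)).eventually_mem hS
  have hcoef : 2 * ((2 * k - 1) * ((Q - 2) / 2) + (k - 1)) + 4 * (-((Q - 2) / 2) + -1) * k
      + 4 * k + 2 * n = 0 := by
    rw [hQ]; ring
  rw [pLap, Finset.sum_congr rfl fun l _ => X_congr_of_eventuallyEq k c a (hSpos.mono fun y hy =>
      hnorm_rpow_mul_X_log_psi k c a s hk.ne' hy (hfun_pos k c a s hc hy) _ _ _ l) l,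
    sum_X_rpow_mul_gaugeDir k c a s hS (hfun_pos k c a s hc hS).ne', hcoef]
  ring

theorem stmt15 (n : ℕ) (hn : 1 ≤ n) (a : Fin n ⊕ Fin n → ℝ) (s : ℝ)
    (c k : ℝ) (hc : c ≠ 0) (hk : 0 < k)
    (Q : ℝ) (hQ : Q = 2 * n + 2 * k) (r R : ℝ) (hr : 0 < r) (hrR : r < R) :
    (∀ x : Pt n, r < psi n k c a s x → psi n k c a s x < R → Sg n a x ≠ 0 →
      pLap n k c a Q
        (fun y => (Real.log (psi n k c a s y) - Real.log R) / (Real.log r - Real.log R)) x = 0)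
    ∧ (∀ x : Pt n, psi n k c a s x = r →
        (Real.log (psi n k c a s x) - Real.log R) / (Real.log r - Real.log R) = 1)
    ∧ (∀ x : Pt n, psi n k c a s x = R →
        (Real.log (psi n k c a s x) - Real.log R) / (Real.log r - Real.log R) = 0) :=
  stmt15_general n a s c k hc hk Q hQ r R hr hrR
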